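/- Let H be a finite-dimensional Hopf algebra. The coinvariants of the Hopf module End(H*) (with actions (α·f)(β) = f(βα₂)S⁻¹(α₁) and (f·h)(β) = f(h ⇀ β)) are exactly the image of the left regular representation L: H* → End(H*), L_γ(β) = γβ. That is, f satisfies α·f = α(1)f for all α ∈ H* if and only if f = L_γ with γ = f(1). -/

import Mathlib

/-!
If `f = L_γ`, coinvariance reduces by associativity of convolution to
`∑ α₂ · (α₁ ∘ S⁻¹) = α(1) ε`, which is the identity `∑ S⁻¹(z₂) z₁ = ε(z) 1` read through `α`.
Conversely, a coinvariant `f` is right `H*`-linear, `f (β α) = f(β) α`, so that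
`f α = f (ε α) = f(ε) α`. For right linearity choose a basis `bᵢ` of `H` with coordinate
functionals `cᵢ`: coinvariance applied to the functionals `x ↦ α (bᵢ x)` and convolution with
`cᵢ` produce `f(β) α`, while computing the same sum through `∑ z₂ S⁻¹(z₁) = ε(z) 1` collapses it
to `f (β α)`.
-/

open TensorProduct

/-- Convolution product on `H* = Dual k H`. -/
noncomputable def conv {k H : Type*} [CommSemiring k] [Semiring H] [HopfAlgebra k H]
    (α β : Module.Dual k H) : Module.Dual k H :=
  (LinearMap.mul' k k) ∘ₗ (TensorProduct.map α β) ∘ₗ (Coalgebra.comul (R := k))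

section Convolution

variable {k H : Type*} [CommSemiring k] [Semiring H] [HopfAlgebra k H]

open WithConv Coalgebra

lemma toConv_conv (α β : Module.Dual k H) : toConv (conv α β) = toConv α * toConv β := rfl

lemma toConv_counit : toConv (counit : Module.Dual k H) = 1 := by
  ext; simp

lemma conv_apply_repr (α β : Module.Dual k H) {z : H} {ι : Type*} (r : Coalgebra.Repr k z ι) :
    conv α β z = ∑ i ∈ r.index, α (r.left i) * β (r.right i) :=
  r.convMul_apply (toConv α) (toConv β)

lemma conv_assoc (α β γ : Module.Dual k H) : conv (conv α β) γ = conv α (conv β γ) :=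
  toConv_injective (mul_assoc (toConv α) (toConv β) (toConv γ))

lemma conv_counit_left (α : Module.Dual k H) : conv counit α = α :=
  toConv_injective (by rw [toConv_conv, toConv_counit, one_mul])

lemma conv_counit_right (α : Module.Dual k H) : conv α counit = α :=
  toConv_injective (by rw [toConv_conv, toConv_counit, mul_one])

lemma conv_smul_left (c : k) (α β : Module.Dual k H) : conv (c • α) β = c • conv α β :=
  toConv_injective (smul_mul_assoc c (toConv α) (toConv β))

lemma conv_smul_right (c : k) (α β : Module.Dual k H) : conv α (c • β) = c • conv α β :=
  toConv_injective (mul_smul_comm c (toConv α) (toConv β))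

lemma conv_add_right (α β γ : Module.Dual k H) : conv α (β + γ) = conv α β + conv α γ :=
  toConv_injective (mul_add (toConv α) (toConv β) (toConv γ))

lemma conv_sum_left {ι : Type*} (s : Finset ι) (α : ι → Module.Dual k H) (β : Module.Dual k H) :
    conv (∑ i ∈ s, α i) β = ∑ i ∈ s, conv (α i) β :=
  toConv_injective (by simp only [toConv_conv, toConv_sum, Finset.sum_mul])

lemma conv_sum_right {ι : Type*} (s : Finset ι) (α : Module.Dual k H) (β : ι → Module.Dual k H) :
    conv α (∑ i ∈ s, β i) = ∑ i ∈ s, conv α (β i) :=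
  toConv_injective (by simp only [toConv_conv, toConv_sum, Finset.mul_sum])

noncomputable def convLeft (α : Module.Dual k H) : Module.Dual k H →ₗ[k] Module.Dual k H where
  toFun := conv α
  map_add' := conv_add_right α
  map_smul' c := conv_smul_right c α

end Convolution

section InverseAntipode

variable {k H : Type*} [CommSemiring k] [Semiring H] [HopfAlgebra k H] {Sinv : H →ₗ[k] H}

open HopfAlgebra Coalgebra

lemma Sinv_one (hS1 : Function.LeftInverse Sinv (antipode k)) : Sinv 1 = 1 := by
  simpa using hS1 1

lemma Sinv_mul (hS1 : Function.LeftInverse Sinv (antipode k))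
    (hS2 : Function.RightInverse Sinv (antipode k)) (x y : H) :
    Sinv (x * y) = Sinv y * Sinv x :=
  hS1.injective (by rw [antipode_mul_antidistrib, hS2, hS2, hS2])

lemma sum_Sinv_right_mul_left_eq_smul (hS1 : Function.LeftInverse Sinv (antipode k))
    (hS2 : Function.RightInverse Sinv (antipode k)) {z : H} {ι : Type*} (r : Repr k z ι) :
    ∑ i ∈ r.index, Sinv (r.right i) * r.left i = counit (R := k) z • 1 := by
  calc ∑ i ∈ r.index, Sinv (r.right i) * r.left i
      = Sinv (∑ i ∈ r.index, antipode k (r.left i) * r.right i) := by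
        simp only [map_sum, Sinv_mul hS1 hS2, hS1 _]
    _ = counit (R := k) z • 1 := by rw [sum_antipode_mul_eq_smul, map_smul, Sinv_one hS1]

lemma sum_right_mul_Sinv_left_eq_smul (hS1 : Function.LeftInverse Sinv (antipode k))
    (hS2 : Function.RightInverse Sinv (antipode k)) {z : H} {ι : Type*} (r : Repr k z ι) :
    ∑ i ∈ r.index, r.right i * Sinv (r.left i) = counit (R := k) z • 1 := by
  calc ∑ i ∈ r.index, r.right i * Sinv (r.left i)
      = Sinv (∑ i ∈ r.index, r.left i * antipode k (r.right i)) := by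
        simp only [map_sum, Sinv_mul hS1 hS2, hS1 _]
    _ = counit (R := k) z • 1 := by rw [sum_mul_antipode_eq_smul, map_smul, Sinv_one hS1]

end InverseAntipode

section Coinvariants

variable {k H : Type*} [CommSemiring k] [Semiring H] [HopfAlgebra k H]

open HopfAlgebra Coalgebra

lemma Coalgebra.Repr.sum_smul_counit {z : H} {ι : Type*} (r : Repr k z ι) :
    ∑ i ∈ r.index, counit (R := k) (r.right i) • r.left i = z := by
  simpa only [map_sum, rid_tmul, one_smul] using
    congrArg (_root_.TensorProduct.rid k H) (sum_tmul_counit_eq r)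

-- `(αA i, αB i)` is a decomposition `∑ α₁ ⊗ α₂` of `Δ α` in `H*`, and the sum is `(α · f)(β)`.
def IsCoinvariant (Sinv : H →ₗ[k] H) (f : Module.Dual k H →ₗ[k] Module.Dual k H) : Prop :=
  ∀ (α : Module.Dual k H) (ι : Type) [Fintype ι] (αA αB : ι → Module.Dual k H),
    (∀ x y : H, α (x * y) = ∑ i, αA i x * αB i y) →
    ∀ β : Module.Dual k H, ∑ i, conv (f (conv β (αB i))) ((αA i) ∘ₗ Sinv) = α 1 • f β

lemma sum_conv_comp_Sinv_eq_smul_counit {Sinv : H →ₗ[k] H}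
    (hS1 : Function.LeftInverse Sinv (antipode k))
    (hS2 : Function.RightInverse Sinv (antipode k)) {α : Module.Dual k H}
    {ι : Type*} [Fintype ι] {αA αB : ι → Module.Dual k H}
    (hα : ∀ x y : H, α (x * y) = ∑ i, αA i x * αB i y) :
    ∑ i, conv (αB i) (αA i ∘ₗ Sinv) = α 1 • counit := by
  ext z
  let r := ℛ k z
  calc (∑ i, conv (αB i) (αA i ∘ₗ Sinv)) z
      = ∑ p ∈ r.index, ∑ i, αA i (Sinv (r.right p)) * αB i (r.left p) := by
        simp only [LinearMap.sum_apply, conv_apply_repr _ _ r, LinearMap.comp_apply, mul_comm]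
        exact Finset.sum_comm
    _ = α (∑ p ∈ r.index, Sinv (r.right p) * r.left p) := by simp only [map_sum, hα]
    _ = (α 1 • counit) z := by
        rw [sum_Sinv_right_mul_left_eq_smul hS1 hS2, map_smul, LinearMap.smul_apply, smul_eq_mul,
          smul_eq_mul, mul_comm]

lemma isCoinvariant_of_eq_conv {Sinv : H →ₗ[k] H}
    (hS1 : Function.LeftInverse Sinv (antipode k))
    (hS2 : Function.RightInverse Sinv (antipode k))
    {f : Module.Dual k H →ₗ[k] Module.Dual k H} (hf : ∀ β, f β = conv (f counit) β) :
    IsCoinvariant Sinv f := by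
  intro α ι _ αA αB hα β
  calc ∑ i, conv (f (conv β (αB i))) (αA i ∘ₗ Sinv)
      = ∑ i, conv (f counit) (conv β (conv (αB i) (αA i ∘ₗ Sinv))) :=
        Finset.sum_congr rfl fun i _ => by rw [hf, conv_assoc, conv_assoc]
    _ = conv (f counit) (conv β (α 1 • counit)) := by
        rw [← sum_conv_comp_Sinv_eq_smul_counit hS1 hS2 hα, conv_sum_right, conv_sum_right]
    _ = α 1 • f β := by rw [conv_smul_right, conv_smul_right, conv_counit_right, ← hf]

lemma sum_conv_eq_apply_one (Φ : H →ₗ[k] Module.Dual k H) {ι : Type*} (s : Finset ι) (h : ι → H)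
    (γ : ι → Module.Dual k H) (hγ : ∀ u, ∑ i ∈ s, γ i u • h i = counit (R := k) u • 1) :
    ∑ i ∈ s, conv (Φ (h i)) (γ i) = Φ 1 := by
  ext z
  let r := ℛ k z
  calc (∑ i ∈ s, conv (Φ (h i)) (γ i)) z
      = ∑ p ∈ r.index, Φ (∑ i ∈ s, γ i (r.right p) • h i) (r.left p) := by
        simp only [LinearMap.sum_apply, conv_apply_repr _ _ r, map_sum, map_smul,
          LinearMap.smul_apply, smul_eq_mul, mul_comm]
        exact Finset.sum_comm
    _ = Φ 1 (∑ p ∈ r.index, counit (R := k) (r.right p) • r.left p) := by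
        simp only [hγ, map_sum, map_smul, LinearMap.smul_apply]
    _ = Φ 1 z := by rw [r.sum_smul_counit]

lemma Module.Basis.sum_coord_mul_coord_smul_mul {ι : Type*} [Fintype ι] (b : Module.Basis ι k H)
    (x y : H) : ∑ i, ∑ j, (b.coord i x * b.coord j y) • (b i * b j) = x * y := by
  conv_rhs => rw [← b.sum_repr x, ← b.sum_repr y]
  rw [Finset.sum_mul_sum]
  simp only [smul_mul_smul_comm, Module.Basis.coord_apply]

lemma Module.Basis.apply_mul_eq_sum_coord {ι : Type*} [Fintype ι] (b : Module.Basis ι k H)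
    (γ : Module.Dual k H) (x y : H) : γ (x * y) = ∑ j, b.coord j x * γ (b j * y) := by
  conv_lhs => rw [← b.sum_repr x]
  simp only [Finset.sum_mul, smul_mul_assoc, map_sum, map_smul, smul_eq_mul,
    Module.Basis.coord_apply]

lemma sum_conv_coord_comp_Sinv_coord_smul {Sinv : H →ₗ[k] H}
    (hS1 : Function.LeftInverse Sinv (antipode k))
    (hS2 : Function.RightInverse Sinv (antipode k))
    {ι : Type*} [Fintype ι] (b : Module.Basis ι k H) (u : H) :
    ∑ p : ι × ι, conv (b.coord p.2 ∘ₗ Sinv) (b.coord p.1) u • (b p.1 * b p.2) =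
      counit (R := k) u • 1 := by
  let r := ℛ k u
  calc ∑ p : ι × ι, conv (b.coord p.2 ∘ₗ Sinv) (b.coord p.1) u • (b p.1 * b p.2)
      = ∑ q ∈ r.index, ∑ i, ∑ j,
          (b.coord i (r.right q) * b.coord j (Sinv (r.left q))) • (b i * b j) := by
        simp only [Fintype.sum_prod_type, conv_apply_repr _ _ r, Finset.sum_smul,
          LinearMap.comp_apply, mul_comm (b.coord _ (Sinv _))]
        exact (Finset.sum_congr rfl fun _ _ => Finset.sum_comm).trans Finset.sum_comm
    _ = counit (R := k) u • 1 := by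
        simp only [b.sum_coord_mul_coord_smul_mul]
        exact sum_right_mul_Sinv_left_eq_smul hS1 hS2 r

theorem IsCoinvariant.map_conv {Sinv : H →ₗ[k] H}
    (hS1 : Function.LeftInverse Sinv (antipode k))
    (hS2 : Function.RightInverse Sinv (antipode k))
    {f : Module.Dual k H →ₗ[k] Module.Dual k H} (hf : IsCoinvariant Sinv f)
    {ι : Type} [Fintype ι] (b : Module.Basis ι k H) (β α : Module.Dual k H) :
    f (conv β α) = conv (f β) α := by
  let Φ : H →ₗ[k] Module.Dual k H :=
    f ∘ₗ convLeft β ∘ₗ LinearMap.llcomp k H H k α ∘ₗ LinearMap.mul k H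
  have hΦ : ∀ i, ∑ j, conv (Φ (b i * b j)) (b.coord j ∘ₗ Sinv) = α (b i) • f β := by
    intro i
    have := hf (α ∘ₗ LinearMap.mulLeft k (b i)) ι b.coord
      (fun j => α ∘ₗ LinearMap.mulLeft k (b i * b j))
      (fun x y => by
        simpa only [LinearMap.comp_apply, LinearMap.mulLeft_apply, mul_assoc] using
          b.apply_mul_eq_sum_coord (α ∘ₗ LinearMap.mulLeft k (b i)) x y) β
    simp only [LinearMap.comp_apply, LinearMap.mulLeft_apply, mul_one] at this
    exact this
  calc f (conv β α) = Φ 1 := by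
        show _ = f (conv β (α ∘ₗ LinearMap.mulLeft k 1))
        rw [LinearMap.mulLeft_one, LinearMap.comp_id]
    _ = ∑ p : ι × ι, conv (Φ (b p.1 * b p.2)) (conv (b.coord p.2 ∘ₗ Sinv) (b.coord p.1)) :=
        (sum_conv_eq_apply_one Φ _ _ _ (sum_conv_coord_comp_Sinv_coord_smul hS1 hS2 b)).symm
    _ = ∑ i, conv (∑ j, conv (Φ (b i * b j)) (b.coord j ∘ₗ Sinv)) (b.coord i) := by
        simp only [Fintype.sum_prod_type, conv_sum_left, conv_assoc]
    _ = conv (f β) α := by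
        simp only [hΦ, conv_smul_left, ← conv_smul_right, ← conv_sum_right,
          b.sum_dual_apply_smul_coord]

end Coinvariants

/-- Coinvariants of the Hopf module `End(H*)` with action `(α·f)(β) = f(β α₂) S⁻¹(α₁)`
are exactly the left multiplications `L_γ`, `γ = f(1) = f(ε)`. -/
theorem stmt5 {k H : Type*} [Field k] [Ring H] [HopfAlgebra k H] [FiniteDimensional k H]
    (Sinv : H →ₗ[k] H)
    (hS1 : ∀ x, Sinv ((HopfAlgebra.antipode (R := k) : H →ₗ[k] H) x) = x)
    (hS2 : ∀ x, (HopfAlgebra.antipode (R := k) : H →ₗ[k] H) (Sinv x) = x)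
    (f : Module.Dual k H →ₗ[k] Module.Dual k H) :
    (∀ (α : Module.Dual k H) (ι : Type) [Fintype ι] (αA αB : ι → Module.Dual k H),
        (∀ x y : H, α (x * y) = ∑ i, αA i x * αB i y) →
        ∀ β : Module.Dual k H,
          ∑ i, conv (f (conv β (αB i))) ((αA i) ∘ₗ Sinv) = α 1 • f β)
      ↔ (∀ β : Module.Dual k H, f β = conv (f (Coalgebra.counit (R := k))) β) := by
  refine ⟨fun (hf : IsCoinvariant Sinv f) β => ?_, isCoinvariant_of_eq_conv hS1 hS2⟩
  rw [← hf.map_conv hS1 hS2 (Module.finBasis k H), conv_counit_left]
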